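/- arXiv:1101.4999 — 2 statements merged into one kernel-verified Lean document; each statement's English description precedes it below -/
import Mathlib

section
/- Let F be a field and F(X) ∈ F[X_1,...,X_m] nonzero with leading monomial X_1^{i_1}⋯X_m^{i_m} with respect to a lexicographic ordering, and let r ≥ 1. For finite sets S_1,...,S_m ⊆ F with |S_j| = s_j, the number of points of S_1 × ... × S_m at which F has multiplicity at least r is at most (i_1 s_2⋯s_m + s_1 i_2 s_3⋯s_m + ... + s_1⋯s_{m−1} i_m)/r. -/
/-!
Induction on the number of variables, splitting off `X₀`, the most significant variable of the
lexicographic order. Write `f = ∑ₜ gₜ(X') X₀ᵗ`; then `deg_{X₀} f = i₀` and the leading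
coefficient `g = g_{i₀}` has leading exponent `(i₁, …, i_{m-1})`. Fix a point `b` of the last
coordinates and choose `k` with `|k| ≤ mult(g, b)` and `(∂ᵏ g)(b) ≠ 0`. The univariate polynomial
`q(t) = (∂^{(0,k)} f)(t, b)` is then nonzero of degree `≤ i₀`, and its Hasse derivatives at `a`
are the values `(∂^{(s,k)} f)(a, b)`, so `mult(f, (a, b)) ≤ |k| + mult(q, a)`. As `q` has at most
`i₀` roots counted with multiplicity, `∑_{a ∈ S₀} mult(f, (a, b)) ≤ s₀ · mult(g, b) + i₀`; summing
over `b` and using induction gives `∑ₚ mult(f, p) ≤ ∑ⱼ iⱼ ∏_{l ≠ j} sₗ`, and every point counted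
on the left of the theorem contributes at least `r` to this sum.
-/

/-- The `k`-th Hasse derivative of a multivariate polynomial `f`: the coefficient of
`T^k` in `f(X + T)`. -/
noncomputable def hasseDeriv {F : Type*} [CommRing F] {m : ℕ} (k : Fin m →₀ ℕ)
    (f : MvPolynomial (Fin m) F) : MvPolynomial (Fin m) F :=
  MvPolynomial.coeff k
    (MvPolynomial.eval₂ (MvPolynomial.C.comp MvPolynomial.C)
      (fun j => MvPolynomial.X j + MvPolynomial.C (MvPolynomial.X j)) f)

/-- `f` has multiplicity at least `r` at the point `a`: all Hasse derivatives of total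
order `< r` vanish at `a`. -/
def HasMultAtLeast {F : Type*} [CommRing F] {m : ℕ} (f : MvPolynomial (Fin m) F)
    (a : Fin m → F) (r : ℕ) : Prop :=
  ∀ k : Fin m →₀ ℕ, (∑ j, k j) < r → MvPolynomial.eval a (hasseDeriv k f) = 0

/-- The multiplicity of `f` at `a`: the largest `r` such that all Hasse derivatives of `f`
of total order `< r` vanish at `a`. -/
noncomputable def multAt {F : Type*} [CommRing F] {m : ℕ} (f : MvPolynomial (Fin m) F)
    (a : Fin m → F) : ℕ :=
  sSup {r | HasMultAtLeast f a r}

open MvPolynomial Finset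

section Combinatorics
variable {m : ℕ}

lemma Finsupp.toLex_cons_lt_cons_iff {x₀ y₀ : ℕ} {x y : Fin m →₀ ℕ} :
    toLex (Finsupp.cons x₀ x) < toLex (Finsupp.cons y₀ y) ↔
      x₀ < y₀ ∨ x₀ = y₀ ∧ toLex x < toLex y :=
  Fin.pi_lex_lt_cons_cons (α := fun _ => ℕ) (x := ⇑x) (y := ⇑y) (s := fun a b => a < b)

lemma Finsupp.toLex_cons_le_cons_iff {x₀ y₀ : ℕ} {x y : Fin m →₀ ℕ} :
    toLex (Finsupp.cons x₀ x) ≤ toLex (Finsupp.cons y₀ y) ↔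
      x₀ < y₀ ∨ x₀ = y₀ ∧ toLex x ≤ toLex y := by
  simp only [le_iff_lt_or_eq, toLex_cons_lt_cons_iff, toLex_inj, Finsupp.cons_injective2.eq_iff]
  tauto

lemma prod_erase_eq_prod_succAbove {M : Type*} [CommMonoid M] (c : Fin (m + 1) → M)
    (j : Fin (m + 1)) : ∏ l ∈ univ.erase j, c l = ∏ l, c (j.succAbove l) := by
  rw [← compl_singleton, ← Fin.image_succAbove_univ,
    prod_image Fin.succAbove_right_injective.injOn]

lemma sum_mul_prod_erase_succ {M : Type*} [CommSemiring M] (i c : Fin (m + 1) → M) :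
    ∑ j, i j * ∏ l ∈ univ.erase j, c l =
      i 0 * ∏ l : Fin m, c l.succ +
        c 0 * ∑ j : Fin m, i j.succ * ∏ l ∈ univ.erase j, c l.succ := by
  cases m with
  | zero => simp
  | succ m =>
    simp_rw [prod_erase_eq_prod_succAbove, Fin.sum_univ_succ (f := fun j => i j * _),
      Fin.prod_univ_succ, Fin.succAbove_zero, Fin.succ_succAbove_zero, Fin.succ_succAbove_succ,
      mul_sum]
    exact congrArg _ (sum_congr rfl fun j _ => by ring)

lemma Fintype.sum_piFinset_succ {α M : Type*} [AddCommMonoid M] (S : Fin (m + 1) → Finset α)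
    (g : (Fin (m + 1) → α) → M) :
    ∑ p ∈ piFinset S, g p =
      ∑ b ∈ piFinset (fun l => S l.succ), ∑ a ∈ S 0, g (Fin.cons a b) := by
  have h := filter_piFinset_eq_map_consEquiv S (fun _ => True)
  simp only [filter_true_of_mem fun _ _ => trivial] at h
  rw [h, sum_map, sum_product_right]
  rfl

end Combinatorics

section HasseDeriv
variable {R : Type*} [CommRing R] {m : ℕ}

lemma prod_X_add_C_X_pow (d : Fin m →₀ ℕ) :
    (∏ j, (X j + C (X j)) ^ d j : MvPolynomial (Fin m) (MvPolynomial (Fin m) R)) =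
      ∑ e ∈ Fintype.piFinset fun j => range (d j + 1),
        monomial (Finsupp.equivFunOnFinite.symm e)
          (monomial (d - Finsupp.equivFunOnFinite.symm e)
            ((∏ j, (d j).choose (e j) : ℕ) : R)) := by
  simp_rw [add_pow, prod_univ_sum]
  refine sum_congr rfl fun e _ => ?_
  rw [monomial_eq, monomial_eq, Finsupp.prod_fintype _ _ (fun _ => pow_zero _),
    Finsupp.prod_fintype _ _ (fun _ => pow_zero _)]
  simp only [prod_mul_distrib, Nat.cast_prod, map_prod, map_natCast, Finsupp.coe_tsub,
    Finsupp.coe_equivFunOnFinite_symm, Pi.sub_apply, C_mul, C_pow]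
  ring

lemma coeff_prod_X_add_C_X_pow (d k : Fin m →₀ ℕ) :
    coeff k (∏ j, (X j + C (X j)) ^ d j : MvPolynomial (Fin m) (MvPolynomial (Fin m) R)) =
      monomial (d - k) ((∏ j, (d j).choose (k j) : ℕ) : R) := by
  rw [prod_X_add_C_X_pow, coeff_sum]
  simp_rw [coeff_monomial, Equiv.symm_apply_eq]
  rw [sum_ite_eq', Equiv.symm_apply_apply]
  split_ifs with hk
  · rfl
  · obtain ⟨j, hj⟩ : ∃ j, d j < k j := by
      simpa [Fintype.mem_piFinset, Nat.lt_succ_iff] using hk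
    rw [prod_eq_zero (mem_univ j) (Nat.choose_eq_zero_of_lt hj), Nat.cast_zero, map_zero]

lemma hasseDeriv_monomial (k d : Fin m →₀ ℕ) (c : R) :
    hasseDeriv k (monomial d c) = monomial (d - k) ((∏ j, (d j).choose (k j) : ℕ) * c) := by
  rw [hasseDeriv, eval₂_monomial, Finsupp.prod_fintype _ _ (fun _ => pow_zero _),
    RingHom.comp_apply, coeff_C_mul, coeff_prod_X_add_C_X_pow, C_mul_monomial, mul_comm]

lemma hasseDeriv_add (k : Fin m →₀ ℕ) (f g : MvPolynomial (Fin m) R) :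
    hasseDeriv k (f + g) = hasseDeriv k f + hasseDeriv k g := by
  simp only [hasseDeriv, eval₂_add, coeff_add]

lemma coeff_hasseDeriv (k n : Fin m →₀ ℕ) (f : MvPolynomial (Fin m) R) :
    coeff n (hasseDeriv k f) = (∏ j, (n j + k j).choose (k j) : ℕ) * coeff (n + k) f := by
  induction f using MvPolynomial.induction_on' with
  | add f g hf hg => rw [hasseDeriv_add, coeff_add, hf, hg, coeff_add, mul_add]
  | monomial d c =>
    rw [hasseDeriv_monomial, coeff_monomial, coeff_monomial]
    by_cases hkd : k ≤ d
    · obtain ⟨e, rfl⟩ := exists_add_of_le hkd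
      rw [add_tsub_cancel_left, add_comm k e]
      simp only [add_left_inj]
      split_ifs with h
      · subst h; rfl
      · rw [mul_zero]
    · obtain ⟨j, hj⟩ : ∃ j, d j < k j := by simpa [Finsupp.le_def] using hkd
      rw [prod_eq_zero (mem_univ j) (Nat.choose_eq_zero_of_lt hj),
        if_neg fun h : d = n + k => hkd (h ▸ le_add_self)]
      simp

lemma hasseDeriv_zero (k : Fin m →₀ ℕ) : hasseDeriv k (0 : MvPolynomial (Fin m) R) = 0 := by
  simp [hasseDeriv]

lemma eval_hasseDeriv (k : Fin m →₀ ℕ) (f : MvPolynomial (Fin m) R) (a : Fin m → R) :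
    eval a (hasseDeriv k f) = coeff k (eval₂ C (fun j => X j + C (a j)) f) := by
  rw [hasseDeriv, ← coeff_map]
  congr 1
  have h : (map (eval a)).comp (eval₂Hom (C.comp C) fun j => X j + C (X j)) =
      eval₂Hom (C : R →+* MvPolynomial (Fin m) R) fun j => X j + C (a j) :=
    ringHom_ext (by simp) (by simp)
  exact RingHom.congr_fun h f

lemma eval₂Hom_X_add_C_injective (a : Fin m → R) :
    Function.Injective
      (eval₂Hom (C : R →+* MvPolynomial (Fin m) R) fun j => X j + C (a j)) := by
  have h : (eval₂Hom C fun j => X j - C (a j)).comp (eval₂Hom C fun j => X j + C (a j)) =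
      RingHom.id (MvPolynomial (Fin m) R) :=
    ringHom_ext (by simp) (by simp)
  intro p q hpq
  have := congrArg (eval₂Hom C fun j => X j - C (a j)) hpq
  rwa [← RingHom.comp_apply, ← RingHom.comp_apply, h, RingHom.id_apply, RingHom.id_apply]
    at this

lemma exists_eval_hasseDeriv_ne_zero {f : MvPolynomial (Fin m) R} (hf : f ≠ 0)
    (a : Fin m → R) : ∃ k, eval a (hasseDeriv k f) ≠ 0 := by
  obtain ⟨k, hk⟩ := ne_zero_iff.mp ((map_ne_zero_iff _ (eval₂Hom_X_add_C_injective a)).mpr hf)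
  exact ⟨k, by rwa [eval_hasseDeriv]⟩

section MultAt
variable {f : MvPolynomial (Fin m) R} {a : Fin m → R}

lemma bddAbove_setOf_hasMultAtLeast (hf : f ≠ 0) : BddAbove {r | HasMultAtLeast f a r} := by
  obtain ⟨k, hk⟩ := exists_eval_hasseDeriv_ne_zero hf a
  exact ⟨∑ j, k j, fun r hr => le_of_not_gt fun h => hk (hr k h)⟩

lemma hasMultAtLeast_multAt (hf : f ≠ 0) : HasMultAtLeast f a (multAt f a) :=
  Nat.sSup_mem ⟨0, fun _ h => absurd h (Nat.not_lt_zero _)⟩ (bddAbove_setOf_hasMultAtLeast hf)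

lemma le_multAt (hf : f ≠ 0) {r : ℕ} (h : HasMultAtLeast f a r) : r ≤ multAt f a :=
  le_csSup (bddAbove_setOf_hasMultAtLeast hf) h

lemma multAt_le_of_eval_hasseDeriv_ne_zero {k : Fin m →₀ ℕ}
    (hk : eval a (hasseDeriv k f) ≠ 0) : multAt f a ≤ ∑ j, k j := by
  have hf : f ≠ 0 := by rintro rfl; simp [hasseDeriv_zero] at hk
  exact le_of_not_gt fun h => hk (hasMultAtLeast_multAt hf k h)

lemma exists_sum_le_multAt_and_eval_hasseDeriv_ne_zero (hf : f ≠ 0) :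
    ∃ k : Fin m →₀ ℕ, ∑ j, k j ≤ multAt f a ∧ eval a (hasseDeriv k f) ≠ 0 := by
  by_contra! h
  have := le_multAt hf fun k hk => h k (Nat.lt_succ_iff.mp hk)
  omega

lemma ncard_hasMultAtLeast_mul_le (hf : f ≠ 0) (s : Finset (Fin m → R)) (r : ℕ) :
    {p | p ∈ s ∧ HasMultAtLeast f p r}.ncard * r ≤ ∑ p ∈ s, multAt f p := by
  classical
  rw [← coe_filter, Set.ncard_coe_finset, ← smul_eq_mul, ← sum_const]
  calc ∑ _p ∈ s with HasMultAtLeast f _p r, r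
      ≤ ∑ p ∈ s with HasMultAtLeast f p r, multAt f p :=
        sum_le_sum fun p hp => le_multAt hf (mem_filter.mp hp).2
    _ ≤ ∑ p ∈ s, multAt f p := sum_le_sum_of_subset (filter_subset _ s)

end MultAt

section Slice

lemma Finsupp.cons_add_cons (s t : ℕ) (k n : Fin m →₀ ℕ) :
    Finsupp.cons s k + Finsupp.cons t n = Finsupp.cons (s + t) (k + n) := by
  ext j
  cases j using Fin.cases <;> simp

lemma coeff_cons_hasseDeriv_cons (s t : ℕ) (k n : Fin m →₀ ℕ)
    (f : MvPolynomial (Fin (m + 1)) R) :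
    coeff (Finsupp.cons t n) (hasseDeriv (Finsupp.cons s k) f) =
      ((t + s).choose s * ∏ j, (n j + k j).choose (k j) : ℕ) *
        coeff (Finsupp.cons (t + s) (n + k)) f := by
  rw [coeff_hasseDeriv, Fin.prod_univ_succ, Finsupp.cons_add_cons]
  simp

lemma finSuccEquiv_hasseDeriv_cons_zero_coeff (k : Fin m →₀ ℕ)
    (f : MvPolynomial (Fin (m + 1)) R) (t : ℕ) :
    (finSuccEquiv R m (hasseDeriv (Finsupp.cons 0 k) f)).coeff t =
      hasseDeriv k ((finSuccEquiv R m f).coeff t) := by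
  ext n
  rw [finSuccEquiv_coeff_coeff, coeff_cons_hasseDeriv_cons, coeff_hasseDeriv,
    finSuccEquiv_coeff_coeff]
  simp

lemma hasseDeriv_finSuccEquiv_hasseDeriv_cons_zero (s : ℕ) (k : Fin m →₀ ℕ)
    (f : MvPolynomial (Fin (m + 1)) R) :
    Polynomial.hasseDeriv s (finSuccEquiv R m (hasseDeriv (Finsupp.cons 0 k) f)) =
      finSuccEquiv R m (hasseDeriv (Finsupp.cons s k) f) := by
  ext t n
  rw [Polynomial.hasseDeriv_coeff, finSuccEquiv_hasseDeriv_cons_zero_coeff, ← map_natCast C,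
    coeff_C_mul, coeff_hasseDeriv, finSuccEquiv_coeff_coeff, finSuccEquiv_coeff_coeff,
    coeff_cons_hasseDeriv_cons]
  push_cast
  ring

lemma Polynomial.hasseDeriv_map {S : Type*} [CommRing S] (φ : R →+* S) (s : ℕ)
    (p : Polynomial R) :
    Polynomial.hasseDeriv s (p.map φ) = (Polynomial.hasseDeriv s p).map φ := by
  ext n
  simp [Polynomial.hasseDeriv_coeff]

noncomputable def hasseDerivSlice (k : Fin m →₀ ℕ) (b : Fin m → R)
    (f : MvPolynomial (Fin (m + 1)) R) : Polynomial R :=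
  (finSuccEquiv R m (hasseDeriv (Finsupp.cons 0 k) f)).map (eval b)

variable {k : Fin m →₀ ℕ} {b : Fin m → R} {f : MvPolynomial (Fin (m + 1)) R}

lemma coeff_hasseDerivSlice (t : ℕ) :
    (hasseDerivSlice k b f).coeff t = eval b (hasseDeriv k ((finSuccEquiv R m f).coeff t)) := by
  rw [hasseDerivSlice, Polynomial.coeff_map, finSuccEquiv_hasseDeriv_cons_zero_coeff]

lemma natDegree_hasseDerivSlice_le :
    (hasseDerivSlice k b f).natDegree ≤ (finSuccEquiv R m f).natDegree :=
  Polynomial.natDegree_le_iff_coeff_eq_zero.mpr fun t ht => by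
    rw [coeff_hasseDerivSlice, Polynomial.coeff_eq_zero_of_natDegree_lt ht, hasseDeriv_zero,
      map_zero]

lemma taylor_hasseDerivSlice_coeff (a : R) (s : ℕ) :
    (Polynomial.taylor a (hasseDerivSlice k b f)).coeff s =
      eval (Fin.cons a b) (hasseDeriv (Finsupp.cons s k) f) := by
  rw [Polynomial.taylor_coeff, hasseDerivSlice, Polynomial.hasseDeriv_map,
    hasseDeriv_finSuccEquiv_hasseDeriv_cons_zero, eval_eq_eval_mv_eval']

lemma HasMultAtLeast.sub_le_rootMultiplicity_hasseDerivSlice {a : R} {r : ℕ}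
    (h : HasMultAtLeast f (Fin.cons a b) r) (hq : hasseDerivSlice k b f ≠ 0) :
    r - ∑ j, k j ≤ (hasseDerivSlice k b f).rootMultiplicity a := by
  rw [Polynomial.rootMultiplicity_eq_natTrailingDegree, ← Polynomial.taylor_apply]
  refine Polynomial.le_natTrailingDegree (mt (Polynomial.taylor_eq_zero a _).mp hq)
    fun s hs => ?_
  rw [taylor_hasseDerivSlice_coeff]
  exact h _ (by simp [Fin.sum_univ_succ]; omega)

end Slice

lemma Polynomial.sum_rootMultiplicity_le_natDegree [IsDomain R] (p : Polynomial R)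
    (T : Finset R) : ∑ a ∈ T, p.rootMultiplicity a ≤ p.natDegree := by
  classical
  calc ∑ a ∈ T, p.rootMultiplicity a = ∑ a ∈ T, p.roots.count a := by
        simp_rw [Polynomial.count_roots]
    _ ≤ ∑ a ∈ T ∪ p.roots.toFinset, p.roots.count a :=
        sum_le_sum_of_subset subset_union_left
    _ = Multiset.card p.roots :=
        Multiset.sum_count_eq_card fun a ha => mem_union_right _ (Multiset.mem_toFinset.mpr ha)
    _ ≤ p.natDegree := Polynomial.card_roots' p

lemma sum_multAt_cons_le [IsDomain R] {f : MvPolynomial (Fin (m + 1)) R} (hf : f ≠ 0)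
    (b : Fin m → R) (T : Finset R) :
    ∑ a ∈ T, multAt f (Fin.cons a b) ≤
      #T * multAt (finSuccEquiv R m f).leadingCoeff b + (finSuccEquiv R m f).natDegree := by
  have hP : finSuccEquiv R m f ≠ 0 := (map_ne_zero_iff _ (finSuccEquiv R m).injective).mpr hf
  obtain ⟨k, hk, hgk⟩ := exists_sum_le_multAt_and_eval_hasseDeriv_ne_zero
    (a := b) (Polynomial.leadingCoeff_ne_zero.mpr hP)
  have hq : hasseDerivSlice k b f ≠ 0 := fun h => hgk <| by
    rw [Polynomial.leadingCoeff, ← coeff_hasseDerivSlice, h, Polynomial.coeff_zero]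
  calc ∑ a ∈ T, multAt f (Fin.cons a b)
      ≤ ∑ a ∈ T, (∑ j, k j + (hasseDerivSlice k b f).rootMultiplicity a) :=
        sum_le_sum fun a _ => by
          have := (hasMultAtLeast_multAt (a := Fin.cons a b) hf)
            |>.sub_le_rootMultiplicity_hasseDerivSlice hq
          omega
    _ = #T * ∑ j, k j + ∑ a ∈ T, (hasseDerivSlice k b f).rootMultiplicity a := by
        rw [sum_add_distrib, sum_const, smul_eq_mul]
    _ ≤ #T * multAt (finSuccEquiv R m f).leadingCoeff b + (finSuccEquiv R m f).natDegree :=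
        add_le_add (Nat.mul_le_mul_left _ hk)
          ((Polynomial.sum_rootMultiplicity_le_natDegree _ T).trans natDegree_hasseDerivSlice_le)

def IsLexLeadingExponent (f : MvPolynomial (Fin m) R) (i : Fin m →₀ ℕ) : Prop :=
  coeff i f ≠ 0 ∧ ∀ d ∈ f.support, toLex d ≤ toLex i

namespace IsLexLeadingExponent

lemma ne_zero {f : MvPolynomial (Fin m) R} {i : Fin m →₀ ℕ} (h : IsLexLeadingExponent f i) :
    f ≠ 0 :=
  fun hf => h.1 (by rw [hf, coeff_zero])

variable {f : MvPolynomial (Fin (m + 1)) R} {i : Fin (m + 1) →₀ ℕ}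

lemma natDegree_finSuccEquiv (h : IsLexLeadingExponent f i) :
    (finSuccEquiv R m f).natDegree = i 0 := by
  refine (MvPolynomial.natDegree_finSuccEquiv f).trans (le_antisymm ?_ ?_)
  · refine degreeOf_le_iff.mpr fun d hd => ?_
    have hdi := h.2 d hd
    rw [← Finsupp.cons_tail d, ← Finsupp.cons_tail i, Finsupp.toLex_cons_le_cons_iff] at hdi
    omega
  · exact monomial_le_degreeOf 0 (mem_support_iff.mpr h.1)

lemma leadingCoeff_finSuccEquiv (h : IsLexLeadingExponent f i) :
    IsLexLeadingExponent (finSuccEquiv R m f).leadingCoeff (Finsupp.tail i) := by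
  rw [Polynomial.leadingCoeff, h.natDegree_finSuccEquiv]
  refine ⟨by rw [finSuccEquiv_coeff_coeff, Finsupp.cons_tail]; exact h.1, fun d hd => ?_⟩
  rw [mem_support_iff, finSuccEquiv_coeff_coeff] at hd
  have hdi := h.2 _ (mem_support_iff.mpr hd)
  rw [← Finsupp.cons_tail i, Finsupp.toLex_cons_le_cons_iff] at hdi
  simpa using hdi

end IsLexLeadingExponent

theorem sum_multAt_piFinset_le [IsDomain R] :
    ∀ {m : ℕ} {f : MvPolynomial (Fin m) R} {i : Fin m →₀ ℕ}, IsLexLeadingExponent f i →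
      ∀ S : Fin m → Finset R,
        ∑ p ∈ Fintype.piFinset S, multAt f p ≤ ∑ j, i j * ∏ l ∈ univ.erase j, #(S l)
  | 0, f, i, h, S => by
    refine (sum_eq_zero fun p _ => ?_).trans_le (Nat.zero_le _)
    obtain ⟨k, hk⟩ := exists_eval_hasseDeriv_ne_zero h.ne_zero p
    simpa using multAt_le_of_eval_hasseDeriv_ne_zero hk
  | m + 1, f, i, h, S => by
    set g := (finSuccEquiv R m f).leadingCoeff
    have ih := sum_multAt_piFinset_le h.leadingCoeff_finSuccEquiv fun l => S l.succ
    rw [Fintype.sum_piFinset_succ, sum_mul_prod_erase_succ]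
    calc ∑ b ∈ Fintype.piFinset (fun l => S l.succ), ∑ a ∈ S 0, multAt f (Fin.cons a b)
        ≤ ∑ b ∈ Fintype.piFinset (fun l => S l.succ), (#(S 0) * multAt g b + i 0) :=
          sum_le_sum fun b _ => h.natDegree_finSuccEquiv ▸ sum_multAt_cons_le h.ne_zero b (S 0)
      _ = i 0 * ∏ l : Fin m, #(S l.succ) +
            #(S 0) * ∑ b ∈ Fintype.piFinset (fun l => S l.succ), multAt g b := by
          rw [sum_add_distrib, ← mul_sum, sum_const, Fintype.card_piFinset, smul_eq_mul]
          ring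
      _ ≤ _ := by gcongr; exact ih

end HasseDeriv

theorem schwartz_zippel_multiplicity_general {F : Type*} [Field F] {m : ℕ}
    (f : MvPolynomial (Fin m) F) (i : Fin m →₀ ℕ)
    (hcoeff : MvPolynomial.coeff i f ≠ 0)
    (hlead : ∀ j ∈ f.support, toLex j ≤ toLex i)
    (S : Fin m → Finset F) (r : ℕ) (hr : 1 ≤ r) :
    ({p : Fin m → F | p ∈ Fintype.piFinset S ∧ HasMultAtLeast f p r}.ncard : ℚ) ≤
      (∑ j, (i j : ℚ) * ∏ l ∈ Finset.univ.erase j, ((S l).card : ℚ)) / r := by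
  have h : IsLexLeadingExponent f i := ⟨hcoeff, hlead⟩
  rw [le_div_iff₀ (by exact_mod_cast hr)]
  exact_mod_cast (ncard_hasMultAtLeast_mul_le h.ne_zero _ r).trans (sum_multAt_piFinset_le h S)

/-- **generalized Schwartz–Zippel.** If the leading monomial of a nonzero `f`
with respect to the lexicographic ordering (with `X_m ≺ ⋯ ≺ X_1`) is `X_1^{i_1} ⋯ X_m^{i_m}`
and `r ≥ 1`, then the number of points of `S_1 × ⋯ × S_m` at which `f` has multiplicity at
least `r` is at most `(i_1 s_2 ⋯ s_m + s_1 i_2 s_3 ⋯ s_m + ⋯ + s_1 ⋯ s_{m−1} i_m)/r`. -/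
theorem schwartz_zippel_multiplicity {F : Type*} [Field F] {m : ℕ}
    (f : MvPolynomial (Fin m) F) (hf : f ≠ 0) (i : Fin m →₀ ℕ)
    (hcoeff : MvPolynomial.coeff i f ≠ 0)
    (hlead : ∀ j ∈ f.support, toLex j ≤ toLex i)
    (S : Fin m → Finset F) (r : ℕ) (hr : 1 ≤ r) :
    ({p : Fin m → F | p ∈ Fintype.piFinset S ∧ HasMultAtLeast f p r}.ncard : ℚ) ≤
      (∑ j, (i j : ℚ) * ∏ l ∈ Finset.univ.erase j, ((S l).card : ℚ)) / r :=
  schwartz_zippel_multiplicity_general f i hcoeff hlead S r hr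
end

section
/- Let F ∈ F[X_1, X_2] be nonzero with leading monomial X_1^{i_1} X_2^{i_2} with respect to the lexicographic ordering with X_2 ≺ X_1, let S_1, S_2 be finite sets of sizes s_1, s_2, and let 1 ≤ k ≤ r−1. If (r−k)·(r/(r+1))·s_1 ≤ i_1 < (r−k)s_1 and 0 ≤ i_2 < k s_2, then the number of points of S_1 × S_2 at which F has multiplicity at least r is at most s_2·(i_1/r) + (i_2/r)·(i_1/(r−k)). -/
/-!
View `f` as a polynomial in `X₁` over `F[X₂]`: its degree is at most `i₁` and its top coefficient
`c(X₂)` is nonzero of degree at most `i₂`. Split off the content, `f = cont(X₂) · g` with `g`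
primitive, and let `m_b` be the order of vanishing of `cont` at `b`. Since `cont ∣ c`, the `m_b`
sum to at most `i₂` over any set of rows. If `f` has multiplicity at least `r` at `(a, b)`, the
row polynomial `g(X₁, b)` (nonzero because `g` is primitive, of degree at most `i₁`) vanishes to
order at least `r - m_b` at `a`; so row `b` contains at most `i₁ / (r - m_b)` such points, which is
at most `i₁/r + m_b i₁/(r(r-k))` when `m_b ≤ k`. When `m_b > k` the trivial bound `s₁` is at most
the same quantity by the lower bound on `i₁`. Summing over the rows gives the claim.
-/

theorem eval_hasseDeriv_s15 {R : Type*} [CommRing R] {m : ℕ} (p : Fin m → R) (k : Fin m →₀ ℕ)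
    (f : MvPolynomial (Fin m) R) :
    MvPolynomial.eval p (hasseDeriv k f) = MvPolynomial.coeff k
      (MvPolynomial.aeval (fun j => MvPolynomial.X j + MvPolynomial.C (p j)) f) := by
  have h : (MvPolynomial.map (MvPolynomial.eval p)).comp
      (MvPolynomial.eval₂Hom (MvPolynomial.C.comp MvPolynomial.C)
        (fun j => MvPolynomial.X j + MvPolynomial.C (MvPolynomial.X j))) =
      (MvPolynomial.aeval (fun j => MvPolynomial.X j + MvPolynomial.C (p j))).toRingHom := by
    ext <;> simp
  rw [hasseDeriv, ← MvPolynomial.coeff_map, ← MvPolynomial.coe_eval₂Hom, ← RingHom.comp_apply, h]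
  rfl

namespace Finsupp

theorem exists_fin_two_eq {M : Type*} [Zero M] (x y : M) :
    ∃ d : Fin 2 →₀ M, d 0 = x ∧ d 1 = y :=
  ⟨equivFunOnFinite.symm ![x, y], rfl, rfl⟩

theorem le_of_toLex_le_fin_two {d i : Fin 2 →₀ ℕ} (h : toLex d ≤ toLex i) :
    d 0 ≤ i 0 ∧ (d 0 = i 0 → d 1 ≤ i 1) := by
  by_contra! hlt
  refine h.not_gt (Lex.lt_iff.mpr ?_)
  by_cases h0 : d 0 ≤ i 0
  · exact ⟨1, fun j hj => by fin_cases j <;> simp_all, (hlt h0).2⟩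
  · exact ⟨0, fun j hj => absurd hj (Fin.not_lt_zero j), not_le.mp h0⟩

end Finsupp

namespace Polynomial

section CommRing

variable {R : Type*} [CommRing R]

/-- `X₁` becomes the outer variable and `X₂` the inner one: `(toBivariate f).coeff e` is the
coefficient of `X₁ ^ e` in `f`, as a polynomial in `X₂`. -/
noncomputable def toBivariate : MvPolynomial (Fin 2) R →ₐ[R] R[X][X] :=
  MvPolynomial.aeval ![X, C X]

theorem toBivariate_monomial (d : Fin 2 →₀ ℕ) (c : R) :
    toBivariate (MvPolynomial.monomial d c) = C (monomial (d 1) c) * X ^ d 0 := by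
  simp only [toBivariate, MvPolynomial.aeval_monomial, Finsupp.prod_pow, Fin.prod_univ_two,
    algebraMap_apply, algebraMap_eq, Matrix.cons_val_zero, Matrix.cons_val_one,
    ← C_mul_X_pow_eq_monomial, map_mul, map_pow]
  ring

theorem coeff_coeff_toBivariate (f : MvPolynomial (Fin 2) R) (d : Fin 2 →₀ ℕ) :
    ((toBivariate f).coeff (d 0)).coeff (d 1) = f.coeff d := by
  induction f using MvPolynomial.induction_on' with
  | monomial d' c =>
    have hd : d' = d ↔ d' 0 = d 0 ∧ d' 1 = d 1 := by
      refine ⟨fun h => h ▸ ⟨rfl, rfl⟩, fun ⟨h0, h1⟩ => ?_⟩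
      ext j; fin_cases j <;> assumption
    rw [toBivariate_monomial, coeff_C_mul_X_pow, MvPolynomial.coeff_monomial]
    simp only [hd, coeff_monomial, apply_ite (coeff · (d 1)), coeff_zero, ite_and]
    grind
  | add p q hp hq => simp [hp, hq]

theorem natDegree_toBivariate_le {f : MvPolynomial (Fin 2) R} {i : Fin 2 →₀ ℕ}
    (hlead : ∀ j ∈ f.support, toLex j ≤ toLex i) : (toBivariate f).natDegree ≤ i 0 := by
  refine natDegree_le_iff_coeff_eq_zero.mpr fun e he => ext fun l => ?_
  obtain ⟨d, rfl, rfl⟩ := Finsupp.exists_fin_two_eq e l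
  rw [coeff_zero, coeff_coeff_toBivariate, ← MvPolynomial.notMem_support_iff]
  exact fun hd => he.not_ge (Finsupp.le_of_toLex_le_fin_two (hlead d hd)).1

theorem natDegree_coeff_toBivariate_le {f : MvPolynomial (Fin 2) R} {i : Fin 2 →₀ ℕ}
    (hlead : ∀ j ∈ f.support, toLex j ≤ toLex i) :
    ((toBivariate f).coeff (i 0)).natDegree ≤ i 1 := by
  refine natDegree_le_iff_coeff_eq_zero.mpr fun l hl => ?_
  obtain ⟨d, hd0, rfl⟩ := Finsupp.exists_fin_two_eq (i 0) l
  rw [← hd0, coeff_coeff_toBivariate, ← MvPolynomial.notMem_support_iff]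
  exact fun hd => hl.not_ge ((Finsupp.le_of_toLex_le_fin_two (hlead d hd)).2 hd0)

/-- `P(X + a, Y + b)` for `P ∈ R[Y][X]`. -/
noncomputable def translate (a b : R) : R[X][X] →+* R[X][X] :=
  (compRingHom (X + C (C a))).comp (mapRingHom (compRingHom (X + C b)))

theorem toBivariate_aeval_X_add_C (p : Fin 2 → R) (f : MvPolynomial (Fin 2) R) :
    toBivariate (MvPolynomial.aeval (fun j => MvPolynomial.X j + MvPolynomial.C (p j)) f) =
      translate (p 0) (p 1) (toBivariate f) := by
  have h : (toBivariate.toRingHom.comp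
      (MvPolynomial.aeval (fun j => MvPolynomial.X j + MvPolynomial.C (p j))).toRingHom :
        MvPolynomial (Fin 2) R →+* R[X][X]) =
      (translate (p 0) (p 1)).comp toBivariate.toRingHom := by
    apply MvPolynomial.ringHom_ext
    · intro c; simp [toBivariate, translate]
    · intro j; fin_cases j <;> simp [toBivariate, translate]
  exact RingHom.congr_fun h f

theorem map_evalRingHom_zero_translate (a b : R) (Q : R[X][X]) :
    (translate a b Q).map (evalRingHom 0) = (Q.map (evalRingHom b)).comp (X + C a) := by
  have h : (evalRingHom (0 : R)).comp (compRingHom (X + C b)) = evalRingHom b := by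
    ext <;> simp
  simp [translate, map_comp, Polynomial.map_map, h]

theorem coeff_coeff_translate_C_mul {a b : R} {c u : R[X]} {m : ℕ}
    (hc : c = (X - C b) ^ m * u) (Q : R[X][X]) (e : ℕ) :
    ((translate a b (C c * Q)).coeff e).coeff m =
      u.eval b * ((Q.map (evalRingHom b)).comp (X + C a)).coeff e := by
  have hcb : c.comp (X + C b) = X ^ m * u.comp (X + C b) := by simp [hc, mul_comp]
  have hQ : ((translate a b Q).coeff e).coeff 0 =
      ((Q.map (evalRingHom b)).comp (X + C a)).coeff e := by
    rw [← map_evalRingHom_zero_translate, coeff_map, coeff_zero_eq_eval_zero]; rfl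
  simp only [translate, RingHom.comp_apply, Polynomial.map_mul, map_C, mul_comp, C_comp,
    coe_mapRingHom, coe_compRingHom_apply] at hQ ⊢
  rw [coeff_C_mul, hcb, mul_assoc, coeff_X_pow_mul', if_pos le_rfl, Nat.sub_self,
    mul_coeff_zero, ← hQ, coeff_zero_eq_eval_zero, eval_comp]
  simp

theorem sum_rootMultiplicity_le_natDegree_s15 [IsDomain R] (p : R[X]) (T : Finset R) :
    ∑ a ∈ T, p.rootMultiplicity a ≤ p.natDegree := by
  classical
  calc ∑ a ∈ T, p.rootMultiplicity a = ∑ a ∈ T, p.roots.count a := by simp [count_roots]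
    _ ≤ ∑ a ∈ T ∪ p.roots.toFinset, p.roots.count a :=
      Finset.sum_le_sum_of_subset Finset.subset_union_left
    _ = Multiset.card p.roots := Multiset.sum_count_eq_card
      fun a ha => Finset.mem_union_right _ (Multiset.mem_toFinset.mpr ha)
    _ ≤ p.natDegree := card_roots' p

theorem IsPrimitive.map_evalRingHom_ne_zero [Nontrivial R] {Q : R[X][X]} (hQ : Q.IsPrimitive)
    (b : R) : Q.map (evalRingHom b) ≠ 0 := by
  intro h
  have hdvd : C (X - C b) ∣ Q := by
    rw [C_dvd_iff_dvd_coeff]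
    intro e
    rw [dvd_iff_isRoot, IsRoot, ← coe_evalRingHom, ← coeff_map, h, coeff_zero]
  exact not_isUnit_X_sub_C b (hQ _ hdvd)

end CommRing

variable {F : Type*} [Field F] [DecidableEq F]

theorem sum_rootMultiplicity_content_le {P : F[X][X]} {n : ℕ} (hn : P.coeff n ≠ 0)
    (T : Finset F) : ∑ b ∈ T, P.content.rootMultiplicity b ≤ (P.coeff n).natDegree :=
  (sum_rootMultiplicity_le_natDegree_s15 _ T).trans (natDegree_le_of_dvd (content_dvd_coeff n) hn)

/-- With `content P = (Y - b) ^ m * u` and `u(b) ≠ 0`, the `Y ^ m`-coefficient of `translate a b P`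
is `u(b)` times the translate of the row polynomial `(primPart P)(X, b)`. -/
theorem card_mul_sub_rootMultiplicity_content_le {P : F[X][X]} (hP : P ≠ 0) (b : F) {r : ℕ}
    {T : Finset F} (hT : ∀ a ∈ T, ∀ e l, e + l < r → ((translate a b P).coeff e).coeff l = 0) :
    T.card * (r - P.content.rootMultiplicity b) ≤ P.natDegree := by
  set m := P.content.rootMultiplicity b
  obtain ⟨u, hcu, hu⟩ :=
    exists_eq_pow_rootMultiplicity_mul_and_not_dvd P.content (content_eq_zero_iff.not.mpr hP) b
  have hub : u.eval b ≠ 0 := fun h => hu (dvd_iff_isRoot.mpr h)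
  set q := P.primPart.map (evalRingHom b)
  have hroot : ∀ a ∈ T, r - m ≤ q.rootMultiplicity a := by
    intro a ha
    rw [rootMultiplicity_eq_natTrailingDegree]
    refine le_natTrailingDegree (comp_X_add_C_ne_zero_iff.mpr
      ((isPrimitive_primPart P).map_evalRingHom_ne_zero b)) fun e he => ?_
    have h := hT a ha e m (by omega)
    rw [eq_C_content_mul_primPart P, coeff_coeff_translate_C_mul hcu] at h
    exact (mul_eq_zero.mp h).resolve_left hub
  calc T.card * (r - m) = ∑ _a ∈ T, (r - m) := by rw [Finset.sum_const, smul_eq_mul]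
    _ ≤ ∑ a ∈ T, q.rootMultiplicity a := Finset.sum_le_sum hroot
    _ ≤ q.natDegree := sum_rootMultiplicity_le_natDegree_s15 q T
    _ ≤ P.primPart.natDegree := natDegree_map_le
    _ = P.natDegree := natDegree_primPart P

end Polynomial

open Polynomial in
theorem HasMultAtLeast.coeff_coeff_translate_toBivariate {R : Type*} [CommRing R]
    {f : MvPolynomial (Fin 2) R} {p : Fin 2 → R} {r : ℕ} (h : HasMultAtLeast f p r) {e l : ℕ}
    (hel : e + l < r) : ((translate (p 0) (p 1) (toBivariate f)).coeff e).coeff l = 0 := by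
  obtain ⟨d, rfl, rfl⟩ := Finsupp.exists_fin_two_eq e l
  rw [← toBivariate_aeval_X_add_C, coeff_coeff_toBivariate, ← eval_hasseDeriv_s15]
  exact h d (by rwa [Fin.sum_univ_two])

theorem ncard_piFinset_fin_two_filter {α : Type*} (S : Fin 2 → Finset α)
    (Z : (Fin 2 → α) → Prop) [DecidablePred Z] :
    {p | p ∈ Fintype.piFinset S ∧ Z p}.ncard = ∑ b ∈ S 1, {a ∈ S 0 | Z ![a, b]}.card := by
  classical
  have hset : {p | p ∈ Fintype.piFinset S ∧ Z p} = ↑({p ∈ Fintype.piFinset S | Z p}) := by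
    ext; simp
  rw [hset, Set.ncard_coe_finset, Finset.card_eq_sum_card_fiberwise (f := fun p => p 1)
    fun p hp => Fintype.mem_piFinset.mp (Finset.mem_filter.mp hp).1 1]
  refine Finset.sum_congr rfl fun b hb => ?_
  have hfiber : ∀ p : Fin 2 → α, p 1 = b → ![p 0, b] = p := fun p hp => by
    ext j; fin_cases j <;> simp [hp]
  refine Finset.card_nbij' (fun p => p 0) (fun a => ![a, b]) ?_ ?_ ?_ fun _ _ => rfl
  · intro p hp
    rw [Finset.mem_coe, Finset.mem_filter, Finset.mem_filter] at hp
    obtain ⟨⟨hpS, hZ⟩, hpb⟩ := hp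
    exact Finset.mem_filter.mpr ⟨Fintype.mem_piFinset.mp hpS 0, by rwa [hfiber p hpb]⟩
  · intro a ha
    obtain ⟨ha, hZ⟩ := Finset.mem_filter.mp ha
    refine Finset.mem_filter.mpr
      ⟨Finset.mem_filter.mpr ⟨Fintype.mem_piFinset.mpr fun j => ?_, hZ⟩, rfl⟩
    fin_cases j
    exacts [ha, hb]
  · intro p hp
    exact hfiber p (Finset.mem_filter.mp hp).2

/-- For `m ≤ k` use `N ≤ A / (r - m)`; for `m > k` use `N ≤ s ≤ A (r + 1) / (r (r - k))`. -/
theorem le_div_add_mul_div_of_mul_sub_le {N s m A r k : ℕ} (hkr : k < r) (hN : N ≤ s)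
    (hrow : m < r → N * (r - m) ≤ A) (hs : ((r : ℚ) - k) * ((r : ℚ) / (r + 1)) * s ≤ A) :
    (N : ℚ) ≤ A / r + m * (A / (r * (r - k))) := by
  have hrk : (0 : ℚ) < r - k := by rw [sub_pos]; exact_mod_cast hkr
  have hr : (0 : ℚ) < r := by exact_mod_cast hkr.trans_le' (Nat.zero_le k)
  have key : (N : ℚ) * (r * (r - k)) ≤ A * (r - k + m) := by
    rcases le_or_gt m k with hmk | hkm
    · have hNA : (N : ℚ) * (r - m) ≤ A := by
        have := hrow (hmk.trans_lt hkr)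
        rwa [← Nat.cast_le (α := ℚ), Nat.cast_mul, Nat.cast_sub (by omega)] at this
      have hmk' : (m : ℚ) ≤ k := by exact_mod_cast hmk
      nlinarith [mul_le_mul_of_nonneg_right hNA (by linarith : (0 : ℚ) ≤ r - k + m),
        mul_nonneg (mul_nonneg (Nat.cast_nonneg (α := ℚ) N) (Nat.cast_nonneg (α := ℚ) m))
          (sub_nonneg.mpr hmk')]
    · have hs' : (r : ℚ) * (r - k) * s ≤ A * (r + 1) := by
        have h := mul_le_mul_of_nonneg_right hs (by positivity : (0 : ℚ) ≤ r + 1)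
        rwa [mul_right_comm, mul_assoc _ (_ / _), div_mul_cancel₀ _ (by positivity),
          mul_comm _ (r : ℚ)] at h
      have hkm' : (k : ℚ) + 1 ≤ m := by exact_mod_cast hkm
      have hN' : (N : ℚ) ≤ s := by exact_mod_cast hN
      nlinarith [mul_le_mul_of_nonneg_left hN' (mul_pos hr hrk).le,
        mul_le_mul_of_nonneg_left hkm' (Nat.cast_nonneg (α := ℚ) A)]
  rw [mul_div_assoc', div_add_div _ _ hr.ne' (by positivity), le_div_iff₀ (by positivity)]
  nlinarith

open Polynomial in
theorem two_var_closed_formula_C1_general {F : Type*} [Field F]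
    (f : MvPolynomial (Fin 2) F) (i : Fin 2 →₀ ℕ)
    (hcoeff : MvPolynomial.coeff i f ≠ 0)
    (hlead : ∀ j ∈ f.support, toLex j ≤ toLex i)
    (S : Fin 2 → Finset F) (r k : ℕ) (hk1 : 1 ≤ k) (hk2 : k ≤ r - 1)
    (h1 : ((r : ℚ) - k) * ((r : ℚ) / (r + 1)) * (S 0).card ≤ (i 0 : ℚ)) :
    ({p : Fin 2 → F | p ∈ Fintype.piFinset S ∧ HasMultAtLeast f p r}.ncard : ℚ) ≤
      ((S 1).card : ℚ) * ((i 0 : ℚ) / r) + ((i 1 : ℚ) / r) * ((i 0 : ℚ) / ((r : ℚ) - k)) := by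
  classical
  have hkr : k < r := by omega
  set P := toBivariate f
  set m : F → ℕ := fun b => P.content.rootMultiplicity b
  have hP : P.coeff (i 0) ≠ 0 := fun h => hcoeff (by rw [← coeff_coeff_toBivariate, h, coeff_zero])
  have hrow : ∀ b, {a ∈ S 0 | HasMultAtLeast f ![a, b] r}.card * (r - m b) ≤ i 0 := fun b =>
    (card_mul_sub_rootMultiplicity_content_le (ne_of_apply_ne (coeff · (i 0)) hP) b
      fun _ ha _ _ hel => (Finset.mem_filter.mp ha).2.coeff_coeff_translate_toBivariate hel).trans
      (natDegree_toBivariate_le hlead)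
  have hm : ∑ b ∈ S 1, m b ≤ i 1 :=
    (sum_rootMultiplicity_content_le hP (S 1)).trans (natDegree_coeff_toBivariate_le hlead)
  have hrk : (0 : ℚ) ≤ r - k := sub_nonneg.mpr (by exact_mod_cast hkr.le)
  rw [ncard_piFinset_fin_two_filter, Nat.cast_sum]
  calc _ ≤ ∑ b ∈ S 1, (i 0 / r + m b * (i 0 / (r * (r - k))) : ℚ) :=
        Finset.sum_le_sum fun b _ => le_div_add_mul_div_of_mul_sub_le hkr
          (Finset.card_filter_le _ _) (fun _ => hrow b) h1
    _ = (S 1).card * (i 0 / r) + (∑ b ∈ S 1, m b : ℕ) * (i 0 / (r * (r - k))) := by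
      rw [Finset.sum_add_distrib, Finset.sum_const, nsmul_eq_mul, Nat.cast_sum, Finset.sum_mul]
    _ ≤ (S 1).card * (i 0 / r) + i 1 * (i 0 / (r * (r - k))) := by gcongr
    _ = _ := by rw [div_mul_div_comm, mul_div_assoc]

/-- **case (C.1).** Let `f ∈ F[X_1,X_2]` be nonzero with leading monomial
`X_1^{i_1} X_2^{i_2}` with respect to the lexicographic ordering with `X_2 ≺ X_1`, and let
`1 ≤ k ≤ r−1`. If `(r−k)·(r/(r+1))·s_1 ≤ i_1 < (r−k)·s_1` and `i_2 < k·s_2`, then the number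
of points of `S_1 × S_2` at which `f` has multiplicity at least `r` is at most
`s_2·(i_1/r) + (i_2/r)·(i_1/(r−k))` (as rational numbers). -/
theorem two_var_closed_formula_C1 {F : Type*} [Field F]
    (f : MvPolynomial (Fin 2) F) (hf : f ≠ 0) (i : Fin 2 →₀ ℕ)
    (hcoeff : MvPolynomial.coeff i f ≠ 0)
    (hlead : ∀ j ∈ f.support, toLex j ≤ toLex i)
    (S : Fin 2 → Finset F) (r k : ℕ) (hk1 : 1 ≤ k) (hk2 : k ≤ r - 1)
    (h1 : ((r : ℚ) - k) * ((r : ℚ) / (r + 1)) * (S 0).card ≤ (i 0 : ℚ))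
    (h2 : (i 0 : ℚ) < ((r : ℚ) - k) * (S 0).card)
    (h3 : (i 1 : ℚ) < (k : ℚ) * (S 1).card) :
    ({p : Fin 2 → F | p ∈ Fintype.piFinset S ∧ HasMultAtLeast f p r}.ncard : ℚ) ≤
      ((S 1).card : ℚ) * ((i 0 : ℚ) / r) + ((i 1 : ℚ) / r) * ((i 0 : ℚ) / ((r : ℚ) - k)) :=
  two_var_closed_formula_C1_general f i hcoeff hlead S r k hk1 hk2 h1
end
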